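/- arXiv:2210.07979 — 2 statements merged into one kernel-verified Lean document; each statement's English description precedes it below -/
import Mathlib

section
/- Recurrence of Nakatsu et al.: f_A(s,i) = min( f_A(s,i-1), j_{s,i} ), where j_{s,i} is the smallest index j > f_A(s-1,i-1) with B[j] = A[i] (∞ if none exists), with the conventions f_A(0,i) = 0 and min with ∞ handled in the obvious way. -/
open List

/-- `lcs A B` is the maximum length of a common subsequence of `A` and `B`. -/
noncomputable def lcs {α : Type*} (A B : List α) : ℕ :=
  sSup {k | ∃ Z : List α, Z <+ A ∧ Z <+ B ∧ Z.length = k}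

/-- `fA A B s i` is the minimum `j` such that `lcs (A[1..i]) (B[1..j]) = s`,
and `⊤` (infinity) if no such `j` exists. -/
noncomputable def fA {α : Type*} (A B : List α) (s i : ℕ) : ℕ∞ :=
  sInf {j : ℕ∞ | ∃ jn : ℕ, j = (jn : ℕ∞) ∧ lcs (A.take i) (B.take jn) = s}

lemma lcs_bdd {α : Type*} (A B : List α) :
    BddAbove {k | ∃ Z : List α, Z <+ A ∧ Z <+ B ∧ Z.length = k} :=
  ⟨A.length, fun _ ⟨_, h1, _, h3⟩ => h3 ▸ h1.length_le⟩

lemma lcs_exists {α : Type*} (A B : List α) :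
    ∃ Z : List α, Z <+ A ∧ Z <+ B ∧ Z.length = lcs A B := by
  have h := Nat.sSup_mem (s := {k | ∃ Z : List α, Z <+ A ∧ Z <+ B ∧ Z.length = k})
    ⟨0, [], nil_sublist _, nil_sublist _, rfl⟩ (lcs_bdd A B)
  exact h

lemma le_lcs {α : Type*} {Z A B : List α} (h1 : Z <+ A) (h2 : Z <+ B) :
    Z.length ≤ lcs A B :=
  le_csSup (lcs_bdd A B) ⟨Z, h1, h2, rfl⟩

lemma lcs_nil_right {α : Type*} (A : List α) : lcs A [] = 0 := by
  obtain ⟨Z, _, h2, h3⟩ := lcs_exists A []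
  simpa [List.sublist_nil.mp h2] using h3.symm

lemma lcs_mono {α : Type*} {A A' B B' : List α} (hA : A <+ A') (hB : B <+ B') :
    lcs A B ≤ lcs A' B' := by
  obtain ⟨Z, h1, h2, h3⟩ := lcs_exists A B
  exact h3 ▸ le_lcs (h1.trans hA) (h2.trans hB)

lemma take_sublist_take {α : Type*} (l : List α) {m n : ℕ} (h : m ≤ n) :
    l.take m <+ l.take n := by
  have h2 := take_sublist m (l.take n)
  rwa [take_take, inf_of_le_left h] at h2

lemma lcs_concat_le {α : Type*} (A B : List α) (b : α) :
    lcs A (B ++ [b]) ≤ lcs A B + 1 := by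
  obtain ⟨Z, h1, h2, h3⟩ := lcs_exists A (B ++ [b])
  obtain ⟨z₁, z₂, rfl, hz1, hz2⟩ := sublist_append_iff.mp h2
  have hle : z₁.length ≤ lcs A B := le_lcs ((sublist_append_left _ _).trans h1) hz1
  have hz2' : z₂.length ≤ 1 := hz2.length_le
  rw [← h3, length_append]
  omega

lemma lcs_take_succ_le {α : Type*} (X B : List α) (n : ℕ) :
    lcs X (B.take (n + 1)) ≤ lcs X (B.take n) + 1 := by
  rw [take_succ]
  cases h : B[n]? with
  | none => simp
  | some b => simpa using lcs_concat_le X (B.take n) b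

lemma lcs_reach {α : Type*} (X B : List α) {s n : ℕ}
    (h : s ≤ lcs X (B.take n)) : ∃ m ≤ n, lcs X (B.take m) = s := by
  have hex : ∃ m, s ≤ lcs X (B.take m) := ⟨n, h⟩
  classical
  refine ⟨Nat.find hex, Nat.find_min' hex h, ?_⟩
  have hspec := Nat.find_spec hex
  rcases hm : Nat.find hex with _ | m'
  · rw [hm] at hspec
    rw [take_zero, lcs_nil_right]
    rw [take_zero, lcs_nil_right] at hspec
    omega
  · have hmin : ¬ s ≤ lcs X (B.take m') := Nat.find_min hex (by omega)
    have hstep := lcs_take_succ_le X B m'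
    rw [hm] at hspec
    omega

lemma sInf_coeSet_eq {P : ℕ → Prop} (h : ∃ n, P n) :
    sInf {j : ℕ∞ | ∃ jn : ℕ, j = (jn : ℕ∞) ∧ P jn} = ((sInf {n | P n} : ℕ) : ℕ∞) := by
  apply _root_.le_antisymm
  · exact sInf_le ⟨sInf {n | P n}, rfl, Nat.sInf_mem h⟩
  · refine le_sInf ?_
    rintro j ⟨jn, rfl, hjn⟩
    exact_mod_cast Nat.sInf_le hjn

lemma sInf_coeSet_top {P : ℕ → Prop} (h : ¬ ∃ n, P n) :
    sInf {j : ℕ∞ | ∃ jn : ℕ, j = (jn : ℕ∞) ∧ P jn} = ⊤ := by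
  have he : {j : ℕ∞ | ∃ jn : ℕ, j = (jn : ℕ∞) ∧ P jn} = ∅ := by
    ext j
    simp only [Set.mem_setOf_eq, Set.mem_empty_iff_false, iff_false]
    rintro ⟨jn, rfl, hjn⟩
    exact h ⟨jn, hjn⟩
  rw [he, sInf_empty]

/-- The recurrence of Nakatsu et al.: `f_A(s,i) = min (f_A(s,i-1)) j_{s,i}`, where
`j_{s,i}` is the smallest index `j > f_A(s-1,i-1)` with `B[j] = A[i]` (infinity if none). -/
theorem fA_recurrence {α : Type*} (A B : List α) (s i : ℕ)
    (hs : 1 ≤ s) (hi1 : 1 ≤ i) (hi2 : i ≤ A.length) :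
    fA A B s i = min (fA A B s (i - 1))
      (sInf {j : ℕ∞ | ∃ jn : ℕ, j = (jn : ℕ∞) ∧ fA A B (s - 1) (i - 1) < (jn : ℕ∞) ∧
        jn ≤ B.length ∧ B[jn - 1]? = A[i - 1]?}) := by
  have hia : i - 1 < A.length := by omega
  have haA : A[i - 1]? = some (A[i - 1]'hia) := getElem?_eq_getElem hia
  have hAtake : A.take i = A.take (i - 1) ++ [A[i - 1]'hia] := by
    conv_lhs => rw [show i = (i - 1) + 1 by omega]
    rw [take_succ, haA]
    rfl
  apply _root_.le_antisymm
  · refine le_min ?_ ?_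
    · -- fA s i ≤ fA s (i-1)
      simp only [fA]
      refine le_sInf ?_
      rintro j ⟨jn, rfl, hjn⟩
      have h1 : s ≤ lcs (A.take i) (B.take jn) :=
        hjn ▸ lcs_mono (take_sublist_take A (by omega)) (Sublist.refl _)
      obtain ⟨m, hm, hms⟩ := lcs_reach _ _ h1
      exact le_trans (sInf_le ⟨m, rfl, hms⟩) (by exact_mod_cast hm)
    · -- fA s i ≤ sInf S₂
      refine le_sInf ?_
      rintro j ⟨jn, rfl, hlt, hjnB, hBA⟩
      by_cases hne : ∃ n, lcs (A.take (i - 1)) (B.take n) = s - 1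
      · rw [fA, sInf_coeSet_eq hne] at hlt
        set j₀ := sInf {n | lcs (A.take (i - 1)) (B.take n) = s - 1} with hj₀def
        have hj₀ : lcs (A.take (i - 1)) (B.take j₀) = s - 1 := Nat.sInf_mem hne
        have hj₀lt : j₀ < jn := by exact_mod_cast hlt
        have h1 : s - 1 ≤ lcs (A.take (i - 1)) (B.take (jn - 1)) :=
          hj₀ ▸ lcs_mono (Sublist.refl _) (take_sublist_take B (by omega))
        obtain ⟨Z', hZ1, hZ2, hZ3⟩ := lcs_exists (A.take (i - 1)) (B.take (jn - 1))
        have hBtake : B.take jn = B.take (jn - 1) ++ [A[i - 1]'hia] := by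
          conv_lhs => rw [show jn = (jn - 1) + 1 by omega]
          rw [take_succ, hBA, haA]
          rfl
        have hZA : Z' ++ [A[i - 1]'hia] <+ A.take i := by
          rw [hAtake]; exact hZ1.append (Sublist.refl _)
        have hZB : Z' ++ [A[i - 1]'hia] <+ B.take jn := by
          rw [hBtake]; exact hZ2.append (Sublist.refl _)
        have h2 : s ≤ lcs (A.take i) (B.take jn) := by
          have h3 := le_lcs hZA hZB
          rw [length_append] at h3
          simp only [length_cons, length_nil] at h3
          omega
        obtain ⟨m, hm, hms⟩ := lcs_reach _ _ h2
        simp only [fA]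
        exact le_trans (sInf_le ⟨m, rfl, hms⟩) (by exact_mod_cast hm)
      · rw [fA, sInf_coeSet_top hne] at hlt
        exact absurd hlt (by simp)
  · -- min ≤ fA s i
    simp only [fA]
    refine le_sInf ?_
    rintro j ⟨jn, rfl, hjn⟩
    obtain ⟨Z, hZ1, hZ2, hZ3⟩ := lcs_exists (A.take i) (B.take jn)
    rw [hjn] at hZ3
    rw [hAtake] at hZ1
    obtain ⟨z₁, z₂, rfl, hz1, hz2⟩ := sublist_append_iff.mp hZ1
    rcases sublist_singleton.mp hz2 with rfl | rfl
    · -- Z avoids last char of A.take i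
      rw [append_nil] at hZ2 hZ3
      have h1 : s ≤ lcs (A.take (i - 1)) (B.take jn) := hZ3 ▸ le_lcs hz1 hZ2
      obtain ⟨m, hm, hms⟩ := lcs_reach _ _ h1
      refine le_trans (min_le_left _ _) ?_
      exact le_trans (sInf_le ⟨m, rfl, hms⟩) (by exact_mod_cast hm)
    · -- Z ends with A[i-1]
      have hz₁len : z₁.length = s - 1 := by
        rw [length_append] at hZ3
        simp only [length_cons, length_nil] at hZ3
        omega
      obtain ⟨l₁, l₂, hsplit, hl1, hl2⟩ := append_sublist_iff.mp hZ2
      obtain ⟨l₃, l₄, rfl⟩ := append_of_mem (singleton_sublist.mp hl2)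
      set a := A[i - 1]'hia with hadef
      have hsplit' : B.take jn = (l₁ ++ l₃) ++ a :: l₄ := by rw [hsplit, append_assoc]
      have hlen : (B.take jn).length = (l₁ ++ l₃).length + 1 + l₄.length := by
        rw [hsplit']; simp; omega
      set m := (l₁ ++ l₃).length + 1 with hmdef
      have hmlen : m ≤ (B.take jn).length := by omega
      have hmjn : m ≤ jn := le_trans hmlen (length_take_le _ _)
      have hmB : m ≤ B.length := le_trans hmlen (take_sublist _ _).length_le
      have hgetB : B[m - 1]? = some a := by
        have h4 : (B.take jn)[m - 1]? = some a := by
          rw [hsplit', show m - 1 = (l₁ ++ l₃).length by omega,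
            getElem?_append_right le_rfl]
          simp
        rwa [getElem?_take, if_pos (by omega)] at h4
      have hBtakem : B.take (m - 1) = l₁ ++ l₃ := by
        have h5 : B.take (m - 1) = (B.take jn).take (m - 1) := by
          rw [take_take, inf_of_le_left (by omega)]
        rw [h5, hsplit', show m - 1 = (l₁ ++ l₃).length by omega, take_left]
      have hz1B : z₁ <+ B.take (m - 1) := by
        rw [hBtakem]; exact hl1.trans (sublist_append_left _ _)
      have h6 : s - 1 ≤ lcs (A.take (i - 1)) (B.take (m - 1)) :=
        hz₁len ▸ le_lcs hz1 hz1B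
      obtain ⟨m', hm', hm's⟩ := lcs_reach _ _ h6
      have hfAlt : fA A B (s - 1) (i - 1) < (m : ℕ∞) := by
        refine lt_of_le_of_lt (sInf_le ⟨m', rfl, hm's⟩) ?_
        exact_mod_cast by omega
      refine le_trans (min_le_right _ _) ?_
      refine le_trans (sInf_le ⟨m, rfl, hfAlt, hmB, ?_⟩) (by exact_mod_cast hmjn)
      rw [hgetB, haA]
end

section
/- Structure of minimal including intervals: if [b₁..e₁] and [b₂..e₂] are two distinct minimal intervals of A having P as a subsequence, then b₁ < b₂ implies e₁ < e₂; consequently the set I_A of minimal intervals has cardinality at most |A|. -/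
open List

/-- The substring `A[b..e]` (1-based, inclusive; empty if `b > e`). -/
def substr {α : Type*} (A : List α) (b e : ℕ) : List α := (A.take e).drop (b - 1)

/-- `[b..e]` is a minimal interval of `A` having `P` as a subsequence:
`P` is a subsequence of `A[b..e]` but of no proper subinterval. -/
def MinInterval {α : Type*} (A P : List α) (b e : ℕ) : Prop :=
  1 ≤ b ∧ b ≤ e ∧ e ≤ A.length ∧ P <+ substr A b e ∧
  ∀ b' e', b ≤ b' → e' ≤ e → b' ≤ e' → (b < b' ∨ e' < e) → ¬ P <+ substr A b' e'

lemma minInterval_mono {α : Type*} (A P : List α) {b₁ e₁ b₂ e₂ : ℕ}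
    (h₁ : MinInterval A P b₁ e₁) (h₂ : MinInterval A P b₂ e₂) (hb : b₁ < b₂) :
    e₁ < e₂ := by
  by_contra h
  push_neg at h
  exact h₁.2.2.2.2 b₂ e₂ hb.le h h₂.2.1 (Or.inl hb) h₂.2.2.2.1

/-- Two distinct minimal intervals are totally ordered: `b₁ < b₂` implies `e₁ < e₂`;
consequently the set `I_A` of minimal intervals has at most `|A|` elements. -/
theorem minInterval_structure {α : Type*} (A P : List α) :
    (∀ b₁ e₁ b₂ e₂, MinInterval A P b₁ e₁ → MinInterval A P b₂ e₂ →
      b₁ < b₂ → e₁ < e₂) ∧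
    ({p : ℕ × ℕ | MinInterval A P p.1 p.2}).ncard ≤ A.length := by
  constructor
  · exact fun b₁ e₁ b₂ e₂ h₁ h₂ hb => minInterval_mono A P h₁ h₂ hb
  · have hmap : ∀ p ∈ {p : ℕ × ℕ | MinInterval A P p.1 p.2},
        p.2 ∈ Set.Icc 1 A.length := by
      rintro ⟨b, e⟩ hp
      exact ⟨hp.1.trans hp.2.1, hp.2.2.1⟩
    have hinj : Set.InjOn Prod.snd {p : ℕ × ℕ | MinInterval A P p.1 p.2} := by
      rintro ⟨b₁, e₁⟩ h₁ ⟨b₂, e₂⟩ h₂ he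
      simp only [Set.mem_setOf_eq] at h₁ h₂
      simp only at he
      subst he
      have hb : b₁ = b₂ := by
        rcases lt_trichotomy b₁ b₂ with h | h | h
        · exact absurd (minInterval_mono A P h₁ h₂ h) (lt_irrefl _)
        · exact h
        · exact absurd (minInterval_mono A P h₂ h₁ h) (lt_irrefl _)
      simp [hb]
    have := Set.ncard_le_ncard_of_injOn Prod.snd hmap hinj (Set.finite_Icc _ _)
    refine this.trans ?_
    have : (Set.Icc 1 A.length) = ↑(Finset.Icc 1 A.length) := by simp
    rw [this, Set.ncard_coe_finset, Nat.card_Icc]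
    omega
end
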